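/- arXiv:2605.03601 — 2 statements merged into one kernel-verified Lean document; each statement's English description precedes it below -/
import Mathlib

section
/- Let theta be a parameter for the architecture A = (n_0, ..., n_{L+1}). Fix a hidden neuron (l, i) with l in {1, ..., L} and i in {1, ..., n_l}, and let x_0 in R^{n_0} satisfy z^(l)_i(x_0) = 0 and z^(k)_j(x_0) ≠ 0 for every hidden pair (k, j) ≠ (l, i) with k in {1, ..., L}. For each k in {1, ..., L} let S_k = {j : z^(k)_j(x_0) > 0}. Let g^T be the i-th row of W^(l) D_{S_{l-1}} W^(l-1) ... D_{S_1} W^(1) and assume g ≠ 0; let v = W^(L+1) D_{S_L} W^(L) ... D_{S_{l+1}} W^(l+1) e_i in R^{n_{L+1}}, where e_i is the i-th standard basis vector of R^{n_l}. Then there exist delta > 0, matrices A_+, A_- in R^{n_{L+1} x n_0}, and vectors c_+, c_- such that f_theta(x) = A_+ x + c_+ for all x in the open ball B(x_0, delta) with <g, x - x_0> >= 0, f_theta(x) = A_- x + c_- for all x in B(x_0, delta) with <g, x - x_0> <= 0, and A_+ - A_- = v g^T; in particular (A_+ - A_-)(g / ||g||_2) = ||g||_2 * v. -/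
namespace ReLUNet

open scoped BigOperators

/-- The parameter space of a fully connected ReLU network with architecture
`(n 0, n 1, ..., n (L+1))`.  The index `l : Fin (L+1)` stands for the layer
`l+1` of the paper, carrying a weight matrix `W^(l+1) ∈ ℝ^{n (l+1) × n l}`
and a bias vector `b^(l+1) ∈ ℝ^{n (l+1)}`. -/
abbrev ParamSpace (L : ℕ) (n : ℕ → ℕ) : Type :=
  (l : Fin (L + 1)) → ((Fin (n (l.1 + 1)) → Fin (n l.1) → ℝ) × (Fin (n (l.1 + 1)) → ℝ))

/-- The hidden activations: `hidden θ l x` is `h_l(x)`, with `h_0(x) = x` and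
`h_{l+1}(x) = ReLU (W^(l+1) h_l(x) + b^(l+1))`. -/
noncomputable def hidden {L : ℕ} {n : ℕ → ℕ} (θ : ParamSpace L n) :
    (l : ℕ) → (Fin (n 0) → ℝ) → Fin (n l) → ℝ
  | 0, x => x
  | l + 1, x =>
    if h : l < L + 1 then
      fun i => max ((∑ j, (θ ⟨l, h⟩).1 i j * hidden θ l x j) + (θ ⟨l, h⟩).2 i) 0
    else
      fun _ => 0

/-- The function realized by the parameter `θ`:
`f_θ(x) = W^(L+1) h_L(x) + b^(L+1)`. -/
noncomputable def realize {L : ℕ} {n : ℕ → ℕ} (θ : ParamSpace L n)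
    (x : Fin (n 0) → ℝ) : Fin (n (L + 1)) → ℝ :=
  fun p =>
    (∑ j, (θ ⟨L, Nat.lt_succ_self L⟩).1 p j * hidden θ L x j) +
      (θ ⟨L, Nat.lt_succ_self L⟩).2 p


/-- The preactivation of layer `k+1` (layers are indexed so that `preact θ k`
is `z^{(k+1)} = W^{(k+1)} h_k + b^{(k+1)}` of the paper). -/
noncomputable def preact {L : ℕ} {n : ℕ → ℕ} (θ : ParamSpace L n) (k : ℕ)
    (x : Fin (n 0) → ℝ) : Fin (n (k + 1)) → ℝ :=
  if h : k < L + 1 then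
    fun i => (∑ j, (θ ⟨k, h⟩).1 i j * hidden θ k x j) + (θ ⟨k, h⟩).2 i
  else fun _ => 0

/-- The set of strictly active neurons in layer `k` at the input `x0`. -/
def activePattern {L : ℕ} {n : ℕ → ℕ} (θ : ParamSpace L n) (x0 : Fin (n 0) → ℝ) :
    (k : ℕ) → Set (Fin (n k))
  | 0 => ∅
  | k + 1 => {j | 0 < preact θ k x0 j}

/-- The weight matrices of `θ`, extended by zero above the top layer. -/
noncomputable def weightMatrix {L : ℕ} {n : ℕ → ℕ} (θ : ParamSpace L n) (l : ℕ) :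
    Matrix (Fin (n (l + 1))) (Fin (n l)) ℝ :=
  if h : l < L + 1 then Matrix.of (θ ⟨l, h⟩).1 else 0

/-- The masked matrix product `W^(b) D_{S (b-1)} ⋯ D_{S (c+1)} W^(c+1)`,
mapping layer-`c` vectors to layer-`b` vectors; for `b = c + 1` it is `W^(c+1)`. -/
noncomputable def chainP (n : ℕ → ℕ)
    (W : ∀ l : ℕ, Matrix (Fin (n (l + 1))) (Fin (n l)) ℝ)
    (S : ∀ l : ℕ, Set (Fin (n l))) (c : ℕ) :
    (b : ℕ) → Matrix (Fin (n b)) (Fin (n c)) ℝ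
  | 0 => 0
  | b + 1 =>
    if h : b = c then
      Matrix.of fun i j => W b i (finCongr (congrArg n h.symm) j)
    else
      W b * Matrix.diagonal (fun i => Set.indicator (S b) (fun _ => (1 : ℝ)) i) *
        chainP n W S c b

/-- The Euclidean norm on `ℝ^d`. -/
noncomputable def euclNorm {d : ℕ} (w : Fin d → ℝ) : ℝ := Real.sqrt (∑ j, (w j) ^ 2)


/-! Near `x₀` no hidden neuron other than `(l, i)` changes sign, so every other ReLU acts on a
small ball as the fixed mask `D_{S_k}`.  By induction on depth,
`h_k(x) = h_k(x₀) + M_k (x - x₀) + max(⟨g, x - x₀⟩, 0) u_k`, where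
`M_k = D_{S_k} W^(k) ⋯ D_{S_1} W^(1)` and `u_k` carries the unit jump `e_i` of the kink neuron
through the masked later layers; at the output `u` becomes `v`.  Resolving the `max` on either
side of the hyperplane `⟨g, x - x₀⟩ = 0` gives two affine pieces whose linear parts differ by
`v gᵀ`. -/

open Matrix Filter Topology

section MaskedProducts

variable {n : ℕ → ℕ} (W : ∀ l : ℕ, Matrix (Fin (n (l + 1))) (Fin (n l)) ℝ)
  (S : ∀ l : ℕ, Set (Fin (n l)))

noncomputable def mask {ι : Type*} [DecidableEq ι] (s : Set ι) : Matrix ι ι ℝ :=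
  diagonal fun j => s.indicator (fun _ => 1) j

theorem mask_mulVec_apply {ι : Type*} [Fintype ι] [DecidableEq ι] (s : Set ι) (w : ι → ℝ)
    (j : ι) : (mask s *ᵥ w) j = s.indicator w j := by
  by_cases h : j ∈ s <;> simp [mask, mulVec_diagonal, h]

theorem chainP_succ_self (c : ℕ) : chainP n W S c (c + 1) = W c := by
  rw [chainP, dif_pos rfl]
  rfl

theorem chainP_succ_of_ne {b c : ℕ} (h : b ≠ c) :
    chainP n W S c (b + 1) = W b * mask (S b) * chainP n W S c b := by
  rw [chainP, dif_neg h]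
  rfl

/-- `D_{S_b} W^(b) ⋯ D_{S_1} W^(1)` in the paper's layer numbering. -/
noncomputable def maskedProd : (b : ℕ) → Matrix (Fin (n b)) (Fin (n 0)) ℝ
  | 0 => 1
  | b + 1 => mask (S (b + 1)) * W b * maskedProd b

theorem chainP_zero_succ (b : ℕ) : chainP n W S 0 (b + 1) = W b * maskedProd W S b := by
  induction b with
  | zero => rw [chainP_succ_self, maskedProd, Matrix.mul_one]
  | succ b ih =>
    rw [chainP_succ_of_ne W S b.succ_ne_zero, ih, maskedProd, Matrix.mul_assoc,
      Matrix.mul_assoc]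

theorem maskedProd_succ_mulVec_apply (b : ℕ) (d : Fin (n 0) → ℝ) (j : Fin (n (b + 1))) :
    (maskedProd W S (b + 1) *ᵥ d) j = (S (b + 1)).indicator ((W b * maskedProd W S b) *ᵥ d) j := by
  rw [maskedProd, Matrix.mul_assoc, ← mulVec_mulVec, mask_mulVec_apply]

/-- The jump of `h_b` across the kink of neuron `i` of layer `a + 1`: the unit vector `e_i`
at layer `a + 1`, pushed forward through the masked layers above it.  Indices are compared as
natural numbers since `Fin (n (b + 1))` and `Fin (n (a + 1))` are different types. -/
noncomputable def jumpVec (a : ℕ) (i : Fin (n (a + 1))) : (b : ℕ) → Fin (n b) → ℝ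
  | 0 => 0
  | b + 1 => (fun j : Fin (n (b + 1)) => if b = a ∧ (j : ℕ) = i then 1 else 0) +
      mask (S (b + 1)) *ᵥ W b *ᵥ jumpVec a i b

variable {W S} {a : ℕ} {i : Fin (n (a + 1))}

theorem jumpVec_eq_zero_of_le {b : ℕ} (hb : b ≤ a) : jumpVec W S a i b = 0 := by
  induction b with
  | zero => rfl
  | succ b ih =>
    funext j
    simp [jumpVec, ih (by omega), show b ≠ a by omega]

theorem jumpVec_succ_apply_of_not {b : ℕ} {j : Fin (n (b + 1))} (h : ¬(b = a ∧ (j : ℕ) = i)) :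
    jumpVec W S a i (b + 1) j = (S (b + 1)).indicator (W b *ᵥ jumpVec W S a i b) j := by
  simp only [jumpVec, Pi.add_apply, if_neg h, zero_add, mask_mulVec_apply]

theorem jumpVec_succ_self : jumpVec W S a i (a + 1) = Pi.single i 1 := by
  funext j
  simp [jumpVec, jumpVec_eq_zero_of_le le_rfl, Pi.single_apply, Fin.val_inj]

theorem chainP_col_eq_mulVec_jumpVec {b : ℕ} (hab : a < b) :
    (fun p => chainP n W S (a + 1) (b + 1) p i) = W b *ᵥ jumpVec W S a i b := by
  induction b with
  | zero => omega
  | succ b ih =>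
    rcases (Nat.lt_succ_iff.mp hab).eq_or_lt with rfl | hab
    · rw [chainP_succ_self, jumpVec_succ_self, mulVec_single_one]
      rfl
    · have hjump : jumpVec W S a i (b + 1) = mask (S (b + 1)) *ᵥ W b *ᵥ jumpVec W S a i b := by
        funext j
        simp [jumpVec, hab.ne']
      rw [hjump, ← ih hab, chainP_succ_of_ne W S (by omega : b + 1 ≠ a + 1), Matrix.mul_assoc]
      rfl

end MaskedProducts

section Network

variable {L : ℕ} {n : ℕ → ℕ} (θ : ParamSpace L n)

theorem hidden_succ_apply {b : ℕ} (hb : b < L + 1) (x : Fin (n 0) → ℝ) (j : Fin (n (b + 1))) :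
    hidden θ (b + 1) x j = max (preact θ b x j) 0 := by
  simp only [hidden, preact, dif_pos hb]

theorem preact_eq_mulVec {b : ℕ} (hb : b < L + 1) (x : Fin (n 0) → ℝ) :
    preact θ b x = weightMatrix θ b *ᵥ hidden θ b x + (θ ⟨b, hb⟩).2 := by
  funext j
  simp only [preact, weightMatrix, dif_pos hb]
  rfl

theorem realize_eq_preact (x : Fin (n 0) → ℝ) : realize θ x = preact θ L x := by
  funext p
  simp only [realize, preact, dif_pos (Nat.lt_succ_self L)]

theorem continuous_hidden (k : ℕ) : Continuous (hidden θ k) := by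
  induction k with
  | zero => exact continuous_id
  | succ l ih =>
    by_cases h : l < L + 1
    · simp only [hidden, dif_pos h]
      fun_prop
    · simp only [hidden, dif_neg h]
      exact continuous_const

theorem continuous_preact (k : ℕ) (j : Fin (n (k + 1))) :
    Continuous fun x => preact θ k x j := by
  have hh := continuous_hidden θ k
  by_cases h : k < L + 1
  · simp only [preact, dif_pos h]
    fun_prop
  · simp only [preact, dif_neg h]
    exact continuous_const

def StrictSignsPreserved (x0 x : Fin (n 0) → ℝ) : Prop :=
  ∀ b < L, ∀ j : Fin (n (b + 1)),
    (0 < preact θ b x0 j → 0 < preact θ b x j) ∧ (preact θ b x0 j < 0 → preact θ b x j < 0)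

theorem eventually_strictSignsPreserved (x0 : Fin (n 0) → ℝ) :
    ∀ᶠ x in 𝓝 x0, StrictSignsPreserved θ x0 x := by
  have hneuron : ∀ b j, ∀ᶠ x in 𝓝 x0,
      (0 < preact θ b x0 j → 0 < preact θ b x j) ∧ (preact θ b x0 j < 0 → preact θ b x j < 0) :=
    fun b j =>
      have hc := (continuous_preact θ b j).continuousAt (x := x0)
      (eventually_imp_distrib_left.2 (continuousAt_const.eventually_lt hc)).and
        (eventually_imp_distrib_left.2 (hc.eventually_lt continuousAt_const))
  filter_upwards [(Finset.range L).eventually_all.2 fun b _ => eventually_all.2 (hneuron b)]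
    with x hx b hb using hx b (Finset.mem_range.2 hb)

theorem preact_eq_of_hidden_eq {b : ℕ} (hb : b < L + 1) {x x0 d : Fin (n 0) → ℝ}
    {M : Matrix (Fin (n b)) (Fin (n 0)) ℝ} {τ : ℝ} {u : Fin (n b) → ℝ}
    (h : hidden θ b x = hidden θ b x0 + M *ᵥ d + τ • u) :
    preact θ b x = preact θ b x0 + (weightMatrix θ b * M) *ᵥ d + τ • (weightMatrix θ b *ᵥ u) := by
  rw [preact_eq_mulVec θ hb, preact_eq_mulVec θ hb, h, mulVec_add, mulVec_add, mulVec_smul,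
    mulVec_mulVec]
  abel

theorem max_zero_eq_of_sign_preserved {p0 p : ℝ} (h0 : p0 ≠ 0) (hpos : 0 < p0 → 0 < p)
    (hneg : p0 < 0 → p < 0) : max p 0 = max p0 0 + if 0 < p0 then p - p0 else 0 := by
  rcases h0.lt_or_gt with h | h
  · simp [h.not_gt, (hneg h).le, h.le]
  · simp [h, (hpos h).le, h.le]

end Network

section LocalExpansion

variable {L : ℕ} {n : ℕ → ℕ} (θ : ParamSpace L n) (x0 : Fin (n 0) → ℝ) {a : ℕ}
  (i : Fin (n (a + 1)))

theorem hidden_eq_local_expansion (hz : preact θ a x0 i = 0)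
    (hsame : ∀ j : Fin (n (a + 1)), j ≠ i → preact θ a x0 j ≠ 0)
    (hother : ∀ b, b < L → b ≠ a → ∀ j : Fin (n (b + 1)), preact θ b x0 j ≠ 0)
    {x : Fin (n 0) → ℝ} (hx : StrictSignsPreserved θ x0 x) {b : ℕ} (hb : b ≤ L) :
    hidden θ b x = hidden θ b x0 + maskedProd (weightMatrix θ) (activePattern θ x0) b *ᵥ (x - x0)
      + max ((weightMatrix θ a * maskedProd (weightMatrix θ) (activePattern θ x0) a) i ⬝ᵥ (x - x0)) 0
        • jumpVec (weightMatrix θ) (activePattern θ x0) a i b := by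
  set M := maskedProd (weightMatrix θ) (activePattern θ x0)
  set τ := max ((weightMatrix θ a * M a) i ⬝ᵥ (x - x0)) 0
  induction b with
  | zero =>
    funext j
    simp [hidden, M, maskedProd, jumpVec]
  | succ b ih =>
    have hbL : b < L + 1 := by omega
    have hpre := preact_eq_of_hidden_eq θ hbL (ih (by omega))
    funext j
    rw [Pi.add_apply, Pi.add_apply, Pi.smul_apply, smul_eq_mul, hidden_succ_apply θ hbL,
      hidden_succ_apply θ hbL, maskedProd_succ_mulVec_apply]
    by_cases hkink : b = a ∧ (j : ℕ) = i
    · obtain ⟨rfl, hj⟩ := hkink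
      obtain rfl : j = i := Fin.ext hj
      have hinactive : j ∉ activePattern θ x0 (b + 1) := by simp [activePattern, hz]
      -- `jumpVec b = 0`, so the kink neuron's preactivation is exactly `⟨g, x - x₀⟩`.
      simp [hpre, jumpVec_eq_zero_of_le le_rfl, hz, jumpVec_succ_self, hinactive, τ, mulVec]
    · have h0 : preact θ b x0 j ≠ 0 := by
        by_cases hba : b = a
        · subst hba
          exact hsame j fun h => hkink ⟨rfl, congrArg Fin.val h⟩
        · exact hother b (by omega) hba j
      rw [max_zero_eq_of_sign_preserved h0 (hx b (by omega) j).1 (hx b (by omega) j).2,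
        jumpVec_succ_apply_of_not hkink, hpre]
      simp only [Set.indicator_apply, activePattern, Set.mem_ofPred_eq, Pi.add_apply,
        Pi.smul_apply, smul_eq_mul]
      split_ifs <;> ring

end LocalExpansion

section EuclNorm

variable {d : ℕ}

theorem abs_le_euclNorm (w : Fin d → ℝ) (j : Fin d) : |w j| ≤ euclNorm w := by
  rw [euclNorm, ← Real.sqrt_sq_eq_abs]
  exact Real.sqrt_le_sqrt <|
    Finset.single_le_sum (f := fun m => w m ^ 2) (fun m _ => sq_nonneg _) (Finset.mem_univ j)

theorem dist_lt_of_euclNorm_sub_lt {x y : Fin d → ℝ} {ε : ℝ} (hε : 0 < ε)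
    (h : euclNorm (fun j => x j - y j) < ε) : dist x y < ε :=
  (dist_pi_lt_iff hε).2 fun j => (abs_le_euclNorm _ j).trans_lt h

theorem euclNorm_sq (w : Fin d → ℝ) : euclNorm w ^ 2 = ∑ j, w j ^ 2 :=
  Real.sq_sqrt (Finset.sum_nonneg fun _ _ => sq_nonneg _)

theorem euclNorm_ne_zero {w : Fin d → ℝ} (hw : w ≠ 0) : euclNorm w ≠ 0 := by
  rw [euclNorm, Real.sqrt_ne_zero (Finset.sum_nonneg fun _ _ => sq_nonneg _)]
  contrapose! hw
  funext j
  exact pow_eq_zero_iff two_ne_zero |>.1 <|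
    (Finset.sum_eq_zero_iff_of_nonneg fun m _ => sq_nonneg (w m)).1 hw j (Finset.mem_univ j)

theorem sum_mul_mul_div_euclNorm (c : ℝ) {w : Fin d → ℝ} (hw : w ≠ 0) :
    ∑ j, c * w j * (w j / euclNorm w) = euclNorm w * c := by
  have hne := euclNorm_ne_zero hw
  simp_rw [show ∀ j, c * w j * (w j / euclNorm w) = c / euclNorm w * w j ^ 2 from
    fun j => by ring]
  rw [← Finset.mul_sum, ← euclNorm_sq]
  field_simp

end EuclNorm

/-- **Local affine decomposition of a deep network at a single breakpoint.**
Let `θ` be a parameter, `(a+1, i)` a hidden neuron (so `1 ≤ a+1 ≤ L`), and `x₀`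
a point where the preactivation of `(a+1, i)` vanishes and the preactivations of
all other hidden neurons are nonzero.  With `S_k` the strictly active sets at
`x₀`, let `gᵀ = eᵢᵀ W^{(a+1)} D_{S_a} ⋯ D_{S_1} W^{(1)}` (assumed nonzero) and
`v = W^{(L+1)} D_{S_L} ⋯ D_{S_{a+2}} W^{(a+2)} eᵢ`.  Then near `x₀` the realized
function is affine on each side of the hyperplane `⟨g, x - x₀⟩ = 0`, with jump
of linear part `v gᵀ`; in particular `(A₊ - A₋)(g / ‖g‖₂) = ‖g‖₂ v`. -/
theorem deep_local_tropical_weight (L : ℕ) (n : ℕ → ℕ) (θ : ParamSpace L n)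
    (a : ℕ) (ha : a < L) (i : Fin (n (a + 1)))
    (x0 : Fin (n 0) → ℝ)
    (hz : preact θ a x0 i = 0)
    (hsame : ∀ j : Fin (n (a + 1)), j ≠ i → preact θ a x0 j ≠ 0)
    (hother : ∀ b, b < L → b ≠ a → ∀ j : Fin (n (b + 1)), preact θ b x0 j ≠ 0)
    (g : Fin (n 0) → ℝ)
    (hgdef : g = fun j => chainP n (weightMatrix θ) (activePattern θ x0) 0 (a + 1) i j)
    (hg : g ≠ 0)
    (v : Fin (n (L + 1)) → ℝ)
    (hvdef : v = fun p => chainP n (weightMatrix θ) (activePattern θ x0) (a + 1) (L + 1) p i) :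
    ∃ δ > (0 : ℝ), ∃ (Ap Am : Fin (n (L + 1)) → Fin (n 0) → ℝ)
      (cp cm : Fin (n (L + 1)) → ℝ),
      (∀ x, euclNorm (fun j => x j - x0 j) < δ → 0 ≤ (∑ j, g j * (x j - x0 j)) →
        ∀ p, realize θ x p = (∑ j, Ap p j * x j) + cp p) ∧
      (∀ x, euclNorm (fun j => x j - x0 j) < δ → (∑ j, g j * (x j - x0 j)) ≤ 0 →
        ∀ p, realize θ x p = (∑ j, Am p j * x j) + cm p) ∧
      (∀ p j, Ap p j - Am p j = v p * g j) ∧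
      (∀ p, (∑ j, (Ap p j - Am p j) * (g j / euclNorm g)) = euclNorm g * v p) := by
  obtain ⟨δ, hδ, hsigns⟩ := Metric.eventually_nhds_iff.1 (eventually_strictSignsPreserved θ x0)
  set A := weightMatrix θ L * maskedProd (weightMatrix θ) (activePattern θ x0) L
  have hg_eq : g = (weightMatrix θ a * maskedProd (weightMatrix θ) (activePattern θ x0) a) i := by
    rw [hgdef, ← chainP_zero_succ]
  have hv_eq : v = weightMatrix θ L *ᵥ jumpVec (weightMatrix θ) (activePattern θ x0) a i L := by
    rw [hvdef, chainP_col_eq_mulVec_jumpVec ha]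
  have hexp : ∀ x, euclNorm (fun j => x j - x0 j) < δ →
      realize θ x = realize θ x0 + A *ᵥ (x - x0) + max (g ⬝ᵥ (x - x0)) 0 • v := by
    intro x hx
    rw [hg_eq, hv_eq, realize_eq_preact, realize_eq_preact]
    exact preact_eq_of_hidden_eq θ (Nat.lt_succ_self L) <| hidden_eq_local_expansion θ x0 i hz
      hsame hother (hsigns (dist_lt_of_euclNorm_sub_lt hδ hx)) le_rfl
  refine ⟨δ, hδ, fun p j => A p j + v p * g j, A, realize θ x0 - A *ᵥ x0 - (g ⬝ᵥ x0) • v,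
    realize θ x0 - A *ᵥ x0, ?_, ?_, fun p j => add_sub_cancel_left _ _, fun p => ?_⟩
  · intro x hx hpos p
    rw [hexp x hx, max_eq_left (show 0 ≤ g ⬝ᵥ (x - x0) from hpos)]
    simp only [dotProduct, Pi.sub_apply, mul_sub, Finset.sum_sub_distrib, Pi.add_apply, mulVec,
      Pi.smul_apply, smul_eq_mul, add_mul, mul_assoc, Finset.sum_add_distrib, ← Finset.mul_sum]
    ring
  · intro x hx hneg p
    rw [hexp x hx, max_eq_right (show g ⬝ᵥ (x - x0) ≤ 0 from hneg)]
    simp only [zero_smul, Pi.add_apply, mulVec, dotProduct, Pi.sub_apply, mul_sub,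
      Finset.sum_sub_distrib, Pi.zero_apply, add_zero]
    ring
  · simp only [add_sub_cancel_left]
    exact sum_mul_mul_div_euclNorm (v p) hg

end ReLUNet
end

section
/- Let P ⊆ R^d be a polytope with nonempty interior and let f(x) = V^(2) ReLU(V^(1) x + c^(1)) + c^(2) be a one-hidden-layer ReLU network from R^d to R^m with n + k hidden neurons. Suppose the set of breakpoints of f in int(P) equals (H_1 ∪ ... ∪ H_n) ∩ int(P) for pairwise distinct hyperplanes H_1, ..., H_n, each meeting int(P). Then there exists a one-hidden-layer ReLU network f~(x) = V~^(2) ReLU(V~^(1) x + c~^(1)) + c~^(2) with n + k hidden neurons such that: (1) f~(x) = f(x) for all x in P; (2) for each j in {1, ..., n}, the j-th row V~^(1)_j is nonzero and {x : <V~^(1)_j, x> + c~^(1)_j = 0} = H_j; and (3) for each j in {n+1, ..., n+k}, one has <V~^(1)_j, x> + c~^(1)_j ≠ 0 for all x in P. -/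
/-!
On `P` a neuron `max (ℓᵢ) 0` is affine unless its hyperplane `{ℓᵢ = 0}` crosses `int P`, in which
case `ℓᵢ = λ ℓᵣ` for a fixed representative neuron `r` with the same hyperplane and
`max (λ ℓᵣ) 0 = |λ| max (ℓᵣ) 0 + min λ 0 ℓᵣ`. Hence on `P` the network is a combination of one
kink `max (ℓᵣ) 0` per crossing hyperplane plus affine terms. Near a point of a crossing hyperplane
that lies on no other neuron hyperplane, the network is affine up to that single kink. So a
crossing hyperplane other than the `H j` carries no breakpoints and its kink coefficient vanishes,
while each `H j`, consisting of breakpoints, must be the hyperplane of some neuron. The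
representatives of the `H j` (which have `λ = 1`, hence no affine part) fill the first `n` slots;
each of the other `k` neurons keeps only its affine part, shifted by a constant to be positive on
the compact set `P`, the shift being compensated in the output bias.
-/

namespace ReLUNet

open scoped BigOperators symmDiff

/-- The standard inner product `⟨w, x⟩ = ∑ j, w j * x j` on `ℝ^d`. -/
def sInner {d : ℕ} (w x : Fin d → ℝ) : ℝ := ∑ j, w j * x j

/-- The (affine) hyperplane `{x : ⟨w, x⟩ + β = 0}`. -/
def Hyp {d : ℕ} (w : Fin d → ℝ) (β : ℝ) : Set (Fin d → ℝ) := {x | sInner w x + β = 0}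

/-- A polytope is the convex hull of a finite set. -/
def IsPolytope {d : ℕ} (P : Set (Fin d → ℝ)) : Prop :=
  ∃ s : Finset (Fin d → ℝ), P = convexHull ℝ (↑s : Set (Fin d → ℝ))

/-- The hyperplane `{⟨w,·⟩ + β = 0}` is *inside* `P` if it meets the relative
interior of `P` and `P` is not contained in it. -/
def HypInside {d : ℕ} (w : Fin d → ℝ) (β : ℝ) (P : Set (Fin d → ℝ)) : Prop :=
  (Hyp w β ∩ intrinsicInterior ℝ P).Nonempty ∧ ¬ P ⊆ Hyp w β

/-- The ReLU layer `x ↦ ReLU (W x + b)`. -/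
noncomputable def reluLayer {d n : ℕ} (W : Fin n → Fin d → ℝ) (b : Fin n → ℝ)
    (x : Fin d → ℝ) : Fin n → ℝ :=
  fun i => max (sInner (W i) x + b i) 0

/-- The activation pattern `S_i = {1, …, i} Δ {n}` (in `0`-based indexing:
`{j : j < i} Δ {j : j = n - 1}`). -/
def slabSet (n i : ℕ) : Set (Fin n) :=
  {j : Fin n | (j : ℕ) < i} ∆ {j : Fin n | (j : ℕ) = n - 1}

/-- A slab layer on a polytope `P`: rows nonzero, each hyperplane inside `P`,
and no two hyperplanes meet inside `P`. -/
def IsSlabLayer {d n : ℕ} (W : Fin n → Fin d → ℝ) (b : Fin n → ℝ)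
    (P : Set (Fin d → ℝ)) : Prop :=
  (∀ i, W i ≠ 0) ∧ (∀ i, HypInside (W i) (b i) P) ∧
    ∀ i j, i ≠ j → Hyp (W i) (b i) ∩ Hyp (W j) (b j) ∩ P = ∅

/-- An oriented slab layer: on `P`, the strict activation patterns are exactly
the sets `slabSet n i` for `i = 0, …, n`, and all of them occur. -/
def IsOriented {d n : ℕ} (W : Fin n → Fin d → ℝ) (b : Fin n → ℝ)
    (P : Set (Fin d → ℝ)) : Prop :=
  (∀ x ∈ P, (∀ j, sInner (W j) x + b j ≠ 0) →
      ∃ i ≤ n, {j | 0 < sInner (W j) x + b j} = slabSet n i) ∧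
    (∀ i ≤ n, ∃ x ∈ P, (∀ j, sInner (W j) x + b j ≠ 0) ∧
      {j | 0 < sInner (W j) x + b j} = slabSet n i)

/-- A ReLU layer is transparent on `X` if at every point of `X` some neuron has
nonnegative preactivation. -/
def Transparent {d n : ℕ} (W : Fin n → Fin d → ℝ) (b : Fin n → ℝ)
    (X : Set (Fin d → ℝ)) : Prop :=
  ∀ x ∈ X, ∃ i, 0 ≤ sInner (W i) x + b i

/-- The `ℓ^∞` norm of the pair `(w, β)`. -/
noncomputable def infNormPair {d : ℕ} (w : Fin d → ℝ) (β : ℝ) : ℝ :=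
  max (⨆ j, |w j|) |β|

/-- `(w', β')` is `ε`-close to `(w, β)` after normalizing by the Euclidean norms
of `w'` and `w`, up to a global sign. -/
noncomputable def EpsClose {d : ℕ} (w' : Fin d → ℝ) (β' : ℝ)
    (w : Fin d → ℝ) (β : ℝ) (ε : ℝ) : Prop :=
  min
    (infNormPair (fun j => w' j / euclNorm w' - w j / euclNorm w)
      (β' / euclNorm w' - β / euclNorm w))
    (infNormPair (fun j => w' j / euclNorm w' + w j / euclNorm w)
      (β' / euclNorm w' + β / euclNorm w)) < ε

/-- A one-hidden-layer ReLU network `x ↦ W₂ ReLU (W₁ x + b₁) + b₂`. -/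
noncomputable def oneLayer {d n m : ℕ} (W1 : Fin n → Fin d → ℝ) (b1 : Fin n → ℝ)
    (W2 : Fin m → Fin n → ℝ) (b2 : Fin m → ℝ) (x : Fin d → ℝ) : Fin m → ℝ :=
  fun p => (∑ i, W2 p i * max (sInner (W1 i) x + b1 i) 0) + b2 p

/-- The set of breakpoints of `f`: points near which `f` is not affine. -/
def Breakpoints {d m : ℕ} (f : (Fin d → ℝ) → Fin m → ℝ) : Set (Fin d → ℝ) :=
  {x | ¬ ∃ U : Set (Fin d → ℝ), IsOpen U ∧ x ∈ U ∧
      ∃ (A : Fin m → Fin d → ℝ) (c : Fin m → ℝ),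
        ∀ y ∈ U, ∀ p, f y p = (∑ j, A p j * y j) + c p}


open Finset Filter Topology

section Hyperplanes

variable {d : ℕ}

-- `sInner` is definitionally `dotProduct`, and we work with `⬝ᵥ` throughout.
theorem mem_hyp {w x : Fin d → ℝ} {β : ℝ} : x ∈ Hyp w β ↔ w ⬝ᵥ x + β = 0 := Iff.rfl

theorem isClosed_hyp (w : Fin d → ℝ) (β : ℝ) : IsClosed (Hyp w β) :=
  isClosed_eq (by unfold sInner; fun_prop) continuous_const

theorem dotProduct_add_smul_sub_add (w x y : Fin d → ℝ) (t β : ℝ) :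
    w ⬝ᵥ (x + t • (y - x)) + β = (1 - t) * (w ⬝ᵥ x + β) + t * (w ⬝ᵥ y + β) := by
  simp only [dotProduct_add, dotProduct_smul, dotProduct_sub, smul_eq_mul]
  ring

theorem dotProduct_self_pos {u : Fin d → ℝ} (hu : u ≠ 0) : 0 < u ⬝ᵥ u :=
  (Fintype.sum_nonneg fun i => mul_self_nonneg (u i)).lt_of_ne' (mt dotProduct_self_eq_zero.1 hu)

theorem dotProduct_div_smul_self {u : Fin d → ℝ} (hu : u ≠ 0) (t : ℝ) :
    u ⬝ᵥ ((t / u ⬝ᵥ u) • u) = t := by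
  rw [dotProduct_smul, smul_eq_mul, div_mul_cancel₀ t (dotProduct_self_pos hu).ne']

theorem hyp_smul (w : Fin d → ℝ) (β : ℝ) {t : ℝ} (ht : t ≠ 0) :
    Hyp (t • w) (t * β) = Hyp w β := by
  ext x
  simp only [mem_hyp, smul_dotProduct, smul_eq_mul, ← mul_add, mul_eq_zero, ht, false_or]

theorem eq_smul_of_hyp_subset {u v : Fin d → ℝ} {γ δ : ℝ} (hu : u ≠ 0)
    (h : Hyp u γ ⊆ Hyp v δ) :
    v = (v ⬝ᵥ u / u ⬝ᵥ u) • u ∧ δ = (v ⬝ᵥ u / u ⬝ᵥ u) * γ := by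
  set t := v ⬝ᵥ u / u ⬝ᵥ u
  have huu := (dotProduct_self_pos hu).ne'
  set x₀ := (-γ / u ⬝ᵥ u) • u
  have hx₀ : x₀ ∈ Hyp u γ := by rw [mem_hyp, dotProduct_div_smul_self hu]; ring
  have huz : u ⬝ᵥ (v - t • u) = 0 := by
    simp only [t, dotProduct_sub, dotProduct_smul, smul_eq_mul, dotProduct_comm u v]
    field_simp
    ring
  have hvz : v ⬝ᵥ (v - t • u) = 0 := by
    have h₁ := h hx₀
    have h₂ := h (show x₀ + (v - t • u) ∈ Hyp u γ by
      rw [mem_hyp, dotProduct_add, huz, add_zero]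
      exact hx₀)
    rw [mem_hyp] at h₁ h₂
    rw [dotProduct_add] at h₂
    linarith
  have hz : v - t • u = 0 := dotProduct_self_eq_zero.1 (by
    rw [sub_dotProduct, smul_dotProduct, hvz, huz, smul_zero, sub_zero])
  have hv : v = t • u := sub_eq_zero.1 hz
  refine ⟨hv, ?_⟩
  have h₁ := h hx₀
  rw [mem_hyp, hv, smul_dotProduct, smul_eq_mul, dotProduct_div_smul_self hu] at h₁
  linarith

theorem ne_zero_of_hyp_eq {u v : Fin d → ℝ} {γ δ : ℝ} (hu : u ≠ 0)
    (h : Hyp v δ = Hyp u γ) : v ≠ 0 := by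
  rintro rfl
  have hδ : δ = 0 := by
    have hx : (-γ / u ⬝ᵥ u) • u ∈ Hyp u γ := by rw [mem_hyp, dotProduct_div_smul_self hu]; ring
    rw [← h, mem_hyp, zero_dotProduct, zero_add] at hx
    exact hx
  have hx : ((1 - γ) / u ⬝ᵥ u) • u ∈ Hyp (0 : Fin d → ℝ) δ := by
    rw [mem_hyp, zero_dotProduct, hδ, zero_add]
  rw [h, mem_hyp, dotProduct_div_smul_self hu] at hx
  norm_num at hx

theorem exists_mem_hyp_inter_notMem_hyp {w a x₀ : Fin d → ℝ} {β γ : ℝ} {U : Set (Fin d → ℝ)}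
    (hw : w ≠ 0) (ha : a ≠ 0) (hne : Hyp a γ ≠ Hyp w β) (hU : IsOpen U)
    (hx₀ : x₀ ∈ Hyp w β ∩ U) : ∃ x ∈ Hyp w β ∩ U, x ∉ Hyp a γ := by
  by_cases hx₀a : x₀ ∉ Hyp a γ
  · exact ⟨x₀, hx₀, hx₀a⟩
  obtain ⟨y, hy, hya⟩ : ∃ y ∈ Hyp w β, y ∉ Hyp a γ := by
    by_contra! hsub
    obtain ⟨hat, hγt⟩ := eq_smul_of_hyp_subset hw hsub
    have ht : a ⬝ᵥ w / w ⬝ᵥ w ≠ 0 := fun h0 => ha (by rw [hat, h0, zero_smul])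
    exact hne (by rw [hat, hγt, hyp_smul w β ht])
  have hline : Tendsto (fun t : ℝ => x₀ + t • (y - x₀)) (𝓝 0) (𝓝 x₀) := by
    have hcont : Continuous fun t : ℝ => x₀ + t • (y - x₀) := by fun_prop
    simpa using hcont.tendsto 0
  have hev : ∀ᶠ t in 𝓝[≠] (0 : ℝ), x₀ + t • (y - x₀) ∈ U ∧ t ≠ 0 :=
    ((hline.eventually (hU.mem_nhds hx₀.2)).filter_mono nhdsWithin_le_nhds).and
      self_mem_nhdsWithin
  obtain ⟨t, htU, ht⟩ := hev.exists
  rw [not_not, mem_hyp] at hx₀a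
  rw [mem_hyp] at hy hya
  refine ⟨x₀ + t • (y - x₀), ⟨?_, htU⟩, ?_⟩
  · rw [mem_hyp, dotProduct_add_smul_sub_add, mem_hyp.1 hx₀.1, hy]
    ring
  · rw [mem_hyp, dotProduct_add_smul_sub_add, hx₀a, mul_zero, zero_add]
    exact mul_ne_zero ht hya

theorem exists_mem_hyp_inter_forall_notMem {ι : Type*} [Finite ι] (a : ι → Fin d → ℝ)
    (γ : ι → ℝ) {w : Fin d → ℝ} {β : ℝ} {U : Set (Fin d → ℝ)} (hw : w ≠ 0) (hU : IsOpen U)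
    (hmeet : (Hyp w β ∩ U).Nonempty) :
    ∃ x ∈ Hyp w β ∩ U, ∀ l, a l ≠ 0 → Hyp (a l) (γ l) ≠ Hyp w β → x ∉ Hyp (a l) (γ l) := by
  classical
  have := Fintype.ofFinite ι
  suffices key : ∀ s : Finset ι, (∀ l ∈ s, a l ≠ 0 ∧ Hyp (a l) (γ l) ≠ Hyp w β) →
      ∀ U, IsOpen U → (Hyp w β ∩ U).Nonempty → ∃ x ∈ Hyp w β ∩ U, ∀ l ∈ s, x ∉ Hyp (a l) (γ l) by
    obtain ⟨x, hx, hxs⟩ := key {l | a l ≠ 0 ∧ Hyp (a l) (γ l) ≠ Hyp w β} (by simp) U hU hmeet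
    exact ⟨x, hx, fun l ha hne => hxs l (by simp [ha, hne])⟩
  intro s
  induction s using Finset.induction_on with
  | empty => exact fun _ U _ ⟨x, hx⟩ => ⟨x, hx, by simp⟩
  | insert l s _ ih =>
    intro hs U hU ⟨x₀, hx₀⟩
    obtain ⟨hal, hnel⟩ := hs l (mem_insert_self l s)
    obtain ⟨x₁, ⟨hx₁, hx₁U⟩, hx₁l⟩ := exists_mem_hyp_inter_notMem_hyp hw hal hnel hU hx₀
    obtain ⟨x, ⟨hx, hxU, hxl⟩, hxs⟩ := ih (fun l' hl' => hs l' (mem_insert_of_mem hl'))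
      (U ∩ (Hyp (a l) (γ l))ᶜ) (hU.inter (isClosed_hyp _ _).isOpen_compl) ⟨x₁, hx₁, hx₁U, hx₁l⟩
    refine ⟨x, ⟨hx, hxU⟩, fun l' hl' => ?_⟩
    rcases mem_insert.1 hl' with rfl | hl'
    exacts [hxl, hxs l' hl']

theorem forall_nonneg_or_forall_nonpos {P : Set (Fin d → ℝ)} (hconv : Convex ℝ P)
    (hcl : P ⊆ closure (interior P)) {g : (Fin d → ℝ) → ℝ} (hg : Continuous g)
    (h : ∀ x ∈ interior P, g x ≠ 0) : (∀ x ∈ P, 0 ≤ g x) ∨ (∀ x ∈ P, g x ≤ 0) := by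
  have hint : (∀ x ∈ interior P, 0 < g x) ∨ (∀ x ∈ interior P, g x < 0) := by
    by_contra! hsign
    obtain ⟨⟨x₁, hx₁, h₁⟩, ⟨x₂, hx₂, h₂⟩⟩ := hsign
    obtain ⟨y, hy, hy0⟩ :=
      hconv.interior.isPreconnected.intermediate_value hx₁ hx₂ hg.continuousOn ⟨h₁, h₂⟩
    exact h y hy hy0
  rcases hint with hpos | hneg
  · exact .inl fun x hx => closure_minimal (fun y hy => (hpos y hy).le)
      (isClosed_le continuous_const hg) (hcl hx)
  · exact .inr fun x hx => closure_minimal (fun y hy => (hneg y hy).le)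
      (isClosed_le hg continuous_const) (hcl hx)

end Hyperplanes

section AffineOn

variable {d : ℕ} {U V : Set (Fin d → ℝ)} {f g : (Fin d → ℝ) → ℝ}

def IsAffineOn (g : (Fin d → ℝ) → ℝ) (U : Set (Fin d → ℝ)) : Prop :=
  ∃ (a : Fin d → ℝ) (c : ℝ), ∀ y ∈ U, g y = a ⬝ᵥ y + c

theorem isAffineOn_dotProduct_add (a : Fin d → ℝ) (c : ℝ) :
    IsAffineOn (fun y => a ⬝ᵥ y + c) U :=
  ⟨a, c, fun _ _ => rfl⟩

theorem isAffineOn_const (c : ℝ) : IsAffineOn (fun _ => c) U :=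
  ⟨0, c, fun y _ => by rw [zero_dotProduct, zero_add]⟩

theorem IsAffineOn.mono (hg : IsAffineOn g U) (hVU : V ⊆ U) : IsAffineOn g V :=
  let ⟨a, c, h⟩ := hg
  ⟨a, c, fun y hy => h y (hVU hy)⟩

theorem IsAffineOn.congr (hg : IsAffineOn g U) (hfg : ∀ y ∈ U, f y = g y) : IsAffineOn f U :=
  let ⟨a, c, h⟩ := hg
  ⟨a, c, fun y hy => (hfg y hy).trans (h y hy)⟩

theorem IsAffineOn.add (hf : IsAffineOn f U) (hg : IsAffineOn g U) :
    IsAffineOn (fun y => f y + g y) U :=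
  let ⟨a, c, hf⟩ := hf
  let ⟨b, e, hg⟩ := hg
  ⟨a + b, c + e, fun y hy => by show f y + g y = _; rw [hf y hy, hg y hy, add_dotProduct]; ring⟩

theorem IsAffineOn.const_mul (hg : IsAffineOn g U) (r : ℝ) :
    IsAffineOn (fun y => r * g y) U :=
  let ⟨a, c, hg⟩ := hg
  ⟨r • a, r * c, fun y hy => by show r * g y = _; rw [hg y hy, smul_dotProduct, smul_eq_mul]; ring⟩

theorem IsAffineOn.sub (hf : IsAffineOn f U) (hg : IsAffineOn g U) :
    IsAffineOn (fun y => f y - g y) U :=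
  (hf.add (hg.const_mul (-1))).congr fun y _ => by ring

theorem isAffineOn_sum {ι : Type*} (s : Finset ι) {g : ι → (Fin d → ℝ) → ℝ}
    (hg : ∀ i ∈ s, IsAffineOn (g i) U) : IsAffineOn (fun y => ∑ i ∈ s, g i y) U := by
  refine (Finset.sum_induction g (IsAffineOn · U) (fun _ _ => IsAffineOn.add)
    (isAffineOn_const 0) hg).congr fun y _ => (Finset.sum_apply y s g).symm

theorem max_mul_zero_eq_abs_mul_add (μ s : ℝ) : max (μ * s) 0 = |μ| * max s 0 + min μ 0 * s := by
  rcases le_total 0 μ with hμ | hμ <;> rcases le_total 0 s with hs | hs <;>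
    simp [hμ, hs, abs_of_nonneg, abs_of_nonpos, mul_nonneg, mul_nonpos_of_nonneg_of_nonpos,
      mul_nonpos_of_nonpos_of_nonneg, mul_nonneg_of_nonpos_of_nonpos]

theorem IsAffineOn.max_zero_of_nonneg (hg : IsAffineOn g U) (h : ∀ y ∈ U, 0 ≤ g y) :
    IsAffineOn (fun y => max (g y) 0) U :=
  hg.congr fun y hy => max_eq_left (h y hy)

theorem isAffineOn_max_zero_of_nonpos (h : ∀ y ∈ U, g y ≤ 0) :
    IsAffineOn (fun y => max (g y) 0) U :=
  (isAffineOn_const 0).congr fun y hy => max_eq_right (h y hy)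

theorem IsAffineOn.max_mul_zero_sub (hg : IsAffineOn g U) (μ : ℝ) :
    IsAffineOn (fun y => max (μ * g y) 0 - |μ| * max (g y) 0) U :=
  (hg.const_mul (min μ 0)).congr fun y _ => by rw [max_mul_zero_eq_abs_mul_add]; ring

theorem eq_zero_of_isAffineOn_mul_max_zero {u x : Fin d → ℝ} {γ a : ℝ} (hu : u ≠ 0)
    (hx : u ⬝ᵥ x + γ = 0) (hU : IsOpen U) (hxU : x ∈ U)
    (h : IsAffineOn (fun y => a * max (u ⬝ᵥ y + γ) 0) U) : a = 0 := by
  obtain ⟨b, c, hbc⟩ := h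
  -- the second difference at `x ± t • u` is `0` on the affine side, `a * t * (u ⬝ᵥ u)` on the other
  have hline : Tendsto (fun t : ℝ => (x + t • u, x - t • u)) (𝓝 0) (𝓝 (x, x)) := by
    have hcont : Continuous fun t : ℝ => (x + t • u, x - t • u) := by fun_prop
    simpa using hcont.tendsto 0
  have hev : ∀ᶠ t in 𝓝[>] (0 : ℝ), (x + t • u ∈ U ∧ x - t • u ∈ U) ∧ 0 < t :=
    ((hline.eventually (prod_mem_nhds (hU.mem_nhds hxU) (hU.mem_nhds hxU))).filter_mono
      nhdsWithin_le_nhds).and self_mem_nhdsWithin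
  obtain ⟨t, ⟨hp, hm⟩, ht⟩ := hev.exists
  have huu := dotProduct_self_pos hu
  have ep := hbc _ hp
  have em := hbc _ hm
  have e₀ := hbc _ hxU
  simp only [dotProduct_add, dotProduct_sub, dotProduct_smul, smul_eq_mul] at ep em e₀
  rw [show u ⬝ᵥ x + t * u ⬝ᵥ u + γ = t * u ⬝ᵥ u by linarith,
    max_eq_left (by positivity)] at ep
  rw [show u ⬝ᵥ x - t * u ⬝ᵥ u + γ = -(t * u ⬝ᵥ u) by linarith,
    max_eq_right (by nlinarith)] at em
  rw [hx, max_self] at e₀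
  have : a * (t * u ⬝ᵥ u) = 0 := by linarith
  simpa [ht.ne', huu.ne'] using this

theorem notMem_breakpoints_iff {m : ℕ} {f : (Fin d → ℝ) → Fin m → ℝ} {x : Fin d → ℝ} :
    x ∉ Breakpoints f ↔ ∃ U, IsOpen U ∧ x ∈ U ∧ ∀ p, IsAffineOn (f · p) U := by
  simp only [Breakpoints, Set.mem_ofPred_eq, not_not]
  constructor
  · rintro ⟨U, hU, hxU, A, c, h⟩
    exact ⟨U, hU, hxU, fun p => ⟨A p, c p, fun y hy => h y hy p⟩⟩
  · rintro ⟨U, hU, hxU, h⟩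
    choose A c hAc using h
    exact ⟨U, hU, hxU, A, c, fun y hy p => hAc p y hy⟩

end AffineOn

section Network

variable {d m N : ℕ} (V1 : Fin N → Fin d → ℝ) (c1 : Fin N → ℝ) (V2 : Fin m → Fin N → ℝ)
  (c2 : Fin m → ℝ) {P : Set (Fin d → ℝ)}

theorem oneLayer_apply (x : Fin d → ℝ) (p : Fin m) :
    oneLayer V1 c1 V2 c2 x p = ∑ i, V2 p i * max (V1 i ⬝ᵥ x + c1 i) 0 + c2 p := rfl

/-- Neurons outside `E` keep their sign near `x`, so only the common kink of the neurons in `E`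
remains. -/
theorem exists_isAffineOn_oneLayer_sub (x : Fin d → ℝ) (E : Finset (Fin N)) (u : Fin d → ℝ)
    (γ : ℝ) (μ : Fin N → ℝ) (hE : ∀ i ∈ E, V1 i = μ i • u ∧ c1 i = μ i * γ)
    (hnE : ∀ i ∉ E, V1 i ≠ 0 → V1 i ⬝ᵥ x + c1 i ≠ 0) :
    ∃ U, IsOpen U ∧ x ∈ U ∧ ∀ p, IsAffineOn
      (fun y => oneLayer V1 c1 V2 c2 y p - (∑ i ∈ E, V2 p i * |μ i|) * max (u ⬝ᵥ y + γ) 0) U := by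
  classical
  let U := ⋂ i ∈ ({i | i ∉ E ∧ V1 i ≠ 0} : Finset (Fin N)),
    {y | 0 < (V1 i ⬝ᵥ x + c1 i) * (V1 i ⬝ᵥ y + c1 i)}
  have hU : IsOpen U := isOpen_biInter_finset fun i _ => isOpen_lt continuous_const (by fun_prop)
  have hsign : ∀ i ∉ E, V1 i ≠ 0 → ∀ y ∈ U, 0 < (V1 i ⬝ᵥ x + c1 i) * (V1 i ⬝ᵥ y + c1 i) :=
    fun i hi hV y hy => Set.mem_iInter₂.1 hy i (by simp [hi, hV])
  have hxU : x ∈ U := Set.mem_iInter₂.2 fun i hi => by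
    obtain ⟨hi, hV⟩ := (mem_filter.1 hi).2
    exact mul_self_pos.2 (hnE i hi hV)
  have hneuron : ∀ i, IsAffineOn (fun y => max (V1 i ⬝ᵥ y + c1 i) 0 -
      if i ∈ E then |μ i| * max (u ⬝ᵥ y + γ) 0 else 0) U := by
    intro i
    split_ifs with hi
    · obtain ⟨hV, hc⟩ := hE i hi
      refine ((isAffineOn_dotProduct_add u γ).max_mul_zero_sub (μ i)).congr fun y _ => ?_
      rw [hV, hc, smul_dotProduct, smul_eq_mul, mul_add]
    simp only [sub_zero]
    by_cases hV : V1 i = 0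
    · exact (isAffineOn_const (max (c1 i) 0)).congr fun y _ => by rw [hV, zero_dotProduct, zero_add]
    rcases (hnE i hi hV).lt_or_gt with hneg | hpos
    · exact isAffineOn_max_zero_of_nonpos fun y hy =>
        (neg_of_mul_pos_right (hsign i hi hV y hy) hneg.le).le
    · exact (isAffineOn_dotProduct_add _ _).max_zero_of_nonneg fun y hy =>
        (pos_of_mul_pos_right (hsign i hi hV y hy) hpos.le).le
  refine ⟨U, hU, hxU, fun p => ((isAffineOn_sum univ fun i _ => (hneuron i).const_mul (V2 p i)).add
    (isAffineOn_const (c2 p))).congr fun y _ => ?_⟩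
  simp only [oneLayer_apply, mul_sub, sum_sub_distrib, mul_ite, mul_zero, sum_ite_mem, univ_inter,
    sum_mul, mul_assoc]
  ring

/-- Depends on `i` only through its hyperplane: one representative neuron per hyperplane. -/
noncomputable def hypRep (i : Fin N) : Fin N :=
  Classical.choose (⟨i, rfl⟩ : ∃ i', Hyp (V1 i') (c1 i') = Hyp (V1 i) (c1 i))

theorem hyp_hypRep (i : Fin N) :
    Hyp (V1 (hypRep V1 c1 i)) (c1 (hypRep V1 c1 i)) = Hyp (V1 i) (c1 i) :=
  Classical.choose_spec (⟨i, rfl⟩ : ∃ i', Hyp (V1 i') (c1 i') = Hyp (V1 i) (c1 i))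

theorem hypRep_eq_of_hyp_eq {i i' : Fin N} (h : Hyp (V1 i) (c1 i) = Hyp (V1 i') (c1 i')) :
    hypRep V1 c1 i = hypRep V1 c1 i' := by
  simp only [hypRep, h]

theorem hypRep_hypRep (i : Fin N) : hypRep V1 c1 (hypRep V1 c1 i) = hypRep V1 c1 i :=
  hypRep_eq_of_hyp_eq V1 c1 (hyp_hypRep V1 c1 i)

def IsKink (P : Set (Fin d → ℝ)) (i : Fin N) : Prop :=
  V1 i ≠ 0 ∧ (Hyp (V1 i) (c1 i) ∩ interior P).Nonempty

theorem IsKink.hypRep {i : Fin N} (hi : IsKink V1 c1 P i) :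
    IsKink V1 c1 P (hypRep V1 c1 i) :=
  ⟨ne_zero_of_hyp_eq hi.1 (hyp_hypRep V1 c1 i), (hyp_hypRep V1 c1 i).symm ▸ hi.2⟩

noncomputable def kinkScale (i : Fin N) : ℝ :=
  V1 i ⬝ᵥ V1 (hypRep V1 c1 i) / V1 (hypRep V1 c1 i) ⬝ᵥ V1 (hypRep V1 c1 i)

theorem eq_kinkScale_smul {i : Fin N} (hi : V1 i ≠ 0) :
    V1 i = kinkScale V1 c1 i • V1 (hypRep V1 c1 i) ∧
      c1 i = kinkScale V1 c1 i * c1 (hypRep V1 c1 i) :=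
  eq_smul_of_hyp_subset (ne_zero_of_hyp_eq hi (hyp_hypRep V1 c1 i)) (hyp_hypRep V1 c1 i).le

theorem kinkScale_eq_one {i : Fin N} (hi : V1 i ≠ 0) (hr : hypRep V1 c1 i = i) :
    kinkScale V1 c1 i = 1 := by
  rw [kinkScale, hr]
  exact div_self (dotProduct_self_pos hi).ne'

open Classical in
noncomputable def kinkTerm (P : Set (Fin d → ℝ)) (i : Fin N) (x : Fin d → ℝ) : ℝ :=
  if IsKink V1 c1 P i then
    |kinkScale V1 c1 i| * max (V1 (hypRep V1 c1 i) ⬝ᵥ x + c1 (hypRep V1 c1 i)) 0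
  else 0

open Classical in
noncomputable def kinkCoeff (P : Set (Fin d → ℝ)) (p : Fin m) (i₀ : Fin N) : ℝ :=
  ∑ i with IsKink V1 c1 P i ∧ hypRep V1 c1 i = i₀, V2 p i * |kinkScale V1 c1 i|

theorem sum_mul_kinkTerm (x : Fin d → ℝ) (p : Fin m) :
    ∑ i, V2 p i * kinkTerm V1 c1 P i x =
      ∑ i₀, kinkCoeff V1 c1 V2 P p i₀ * max (V1 i₀ ⬝ᵥ x + c1 i₀) 0 := by
  classical
  simp only [kinkTerm, kinkCoeff, mul_ite, mul_zero, ← sum_filter, sum_mul]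
  rw [← sum_fiberwise {i | IsKink V1 c1 P i} (hypRep V1 c1)]
  refine sum_congr rfl fun i₀ _ => ?_
  rw [filter_filter]
  refine sum_congr rfl fun i hi => ?_
  rw [(mem_filter.1 hi).2.2]
  ring

theorem isAffineOn_max_zero_sub_kinkTerm (hconv : Convex ℝ P) (hcl : P ⊆ closure (interior P))
    (i : Fin N) :
    IsAffineOn (fun x => max (V1 i ⬝ᵥ x + c1 i) 0 - kinkTerm V1 c1 P i x) P := by
  by_cases hi : IsKink V1 c1 P i
  · obtain ⟨hV, hc⟩ := eq_kinkScale_smul V1 c1 hi.1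
    refine ((isAffineOn_dotProduct_add (V1 (hypRep V1 c1 i)) (c1 (hypRep V1 c1 i))).max_mul_zero_sub
      (kinkScale V1 c1 i)).congr
      fun x _ => ?_
    rw [kinkTerm, if_pos hi, hV, hc, smul_dotProduct, smul_eq_mul, mul_add]
  simp only [kinkTerm, if_neg hi, sub_zero]
  have hsign : (∀ x ∈ P, 0 ≤ V1 i ⬝ᵥ x + c1 i) ∨ (∀ x ∈ P, V1 i ⬝ᵥ x + c1 i ≤ 0) := by
    by_cases hV : V1 i = 0
    · simp only [hV, zero_dotProduct, zero_add]
      exact (le_total 0 (c1 i)).imp (fun h _ _ => h) (fun h _ _ => h)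
    · exact forall_nonneg_or_forall_nonpos hconv hcl (by fun_prop) fun x hx h0 => hi ⟨hV, x, h0, hx⟩
  rcases hsign with h | h
  exacts [(isAffineOn_dotProduct_add _ _).max_zero_of_nonneg h, isAffineOn_max_zero_of_nonpos h]

theorem kinkTerm_of_hypRep_eq {i : Fin N} (hi : IsKink V1 c1 P i) (hr : hypRep V1 c1 i = i)
    (x : Fin d → ℝ) : kinkTerm V1 c1 P i x = max (V1 i ⬝ᵥ x + c1 i) 0 := by
  rw [kinkTerm, if_pos hi, kinkScale_eq_one V1 c1 hi.1 hr, hr, abs_one, one_mul]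

theorem exists_neuron_hyp_eq {w : Fin d → ℝ} {β : ℝ} {U : Set (Fin d → ℝ)} (hw : w ≠ 0)
    (hU : IsOpen U) (hmeet : (Hyp w β ∩ U).Nonempty)
    (hbp : Hyp w β ∩ U ⊆ Breakpoints (oneLayer V1 c1 V2 c2)) :
    ∃ i, V1 i ≠ 0 ∧ Hyp (V1 i) (c1 i) = Hyp w β := by
  by_contra! h
  obtain ⟨x, hx, hxa⟩ := exists_mem_hyp_inter_forall_notMem V1 c1 hw hU hmeet
  obtain ⟨U', hU', hxU', hf⟩ := exists_isAffineOn_oneLayer_sub V1 c1 V2 c2 x ∅ w β 0 (by simp)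
    fun i _ hV => hxa i hV (h i hV)
  exact notMem_breakpoints_iff.2 ⟨U', hU', hxU', fun p => (hf p).congr fun y _ => by simp⟩ (hbp hx)

variable {n : ℕ} {w : Fin n → Fin d → ℝ} {β : Fin n → ℝ}

/-- The hyperplane carries no breakpoints, so the kinks of the neurons sharing it cancel. -/
theorem kinkCoeff_hypRep_eq_zero (hw : ∀ j, w j ≠ 0)
    (hbp : ∀ x ∈ interior P, (∀ j, x ∉ Hyp (w j) (β j)) → x ∉ Breakpoints (oneLayer V1 c1 V2 c2))
    {i : Fin N} (hi : IsKink V1 c1 P i) (hne : ∀ j, Hyp (V1 i) (c1 i) ≠ Hyp (w j) (β j))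
    (p : Fin m) : kinkCoeff V1 c1 V2 P p (hypRep V1 c1 i) = 0 := by
  classical
  set i₀ := hypRep V1 c1 i
  have hi₀ : IsKink V1 c1 P i₀ := hi.hypRep
  have hH : Hyp (V1 i₀) (c1 i₀) = Hyp (V1 i) (c1 i) := hyp_hypRep V1 c1 i
  obtain ⟨x, ⟨hxH, hxP⟩, hxa⟩ :=
    exists_mem_hyp_inter_forall_notMem (Sum.elim V1 w) (Sum.elim c1 β) hi₀.1 isOpen_interior hi₀.2
  obtain ⟨U, hU, hxU, hf⟩ := notMem_breakpoints_iff.1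
    (hbp x hxP fun j => hxa (.inr j) (hw j) (hH ▸ (hne j).symm))
  let E : Finset (Fin N) := {i' | IsKink V1 c1 P i' ∧ hypRep V1 c1 i' = i₀}
  have hE : ∀ i' ∈ E, V1 i' = kinkScale V1 c1 i' • V1 i₀ ∧ c1 i' = kinkScale V1 c1 i' * c1 i₀ := by
    intro i' hi'
    obtain ⟨hk, hr⟩ := (mem_filter.1 hi').2
    rw [← hr]
    exact eq_kinkScale_smul V1 c1 hk.1
  have hnE : ∀ i' ∉ E, V1 i' ≠ 0 → V1 i' ⬝ᵥ x + c1 i' ≠ 0 := by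
    refine fun i' hi' hV => hxa (.inl i') hV fun hH' => hi' (mem_filter.2 ⟨mem_univ _, ?_⟩)
    exact ⟨⟨hV, hH' ▸ hi₀.2⟩, (hypRep_eq_of_hyp_eq V1 c1 hH').trans (hypRep_hypRep V1 c1 i)⟩
  obtain ⟨U', hU', hxU', hg⟩ := exists_isAffineOn_oneLayer_sub V1 c1 V2 c2 x E _ _ _ hE hnE
  refine eq_zero_of_isAffineOn_mul_max_zero hi₀.1 hxH (hU.inter hU') ⟨hxU, hxU'⟩ ?_
  exact (((hf p).mono Set.inter_subset_left).sub ((hg p).mono Set.inter_subset_right)).congr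
    fun y _ => by simp only [kinkCoeff, E]; ring

theorem kinkCoeff_eq_zero_of_notMem_range (hw : ∀ j, w j ≠ 0)
    (hbp : ∀ x ∈ interior P, (∀ j, x ∉ Hyp (w j) (β j)) → x ∉ Breakpoints (oneLayer V1 c1 V2 c2))
    {rep : Fin n → Fin N}
    (hrep : ∀ j, hypRep V1 c1 (rep j) = rep j ∧ Hyp (V1 (rep j)) (c1 (rep j)) = Hyp (w j) (β j))
    {i₀ : Fin N} (hi₀ : i₀ ∉ Set.range rep) (p : Fin m) : kinkCoeff V1 c1 V2 P p i₀ = 0 := by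
  classical
  by_cases h : ∃ i, IsKink V1 c1 P i ∧ hypRep V1 c1 i = i₀
  · obtain ⟨i, hi, rfl⟩ := h
    refine kinkCoeff_hypRep_eq_zero V1 c1 V2 c2 hw hbp hi (fun j hj => hi₀ ⟨j, ?_⟩) p
    exact (hrep j).1.symm.trans (hypRep_eq_of_hyp_eq V1 c1 ((hrep j).2.trans hj.symm))
  · exact sum_eq_zero fun i hi => (h ⟨i, (mem_filter.1 hi).2⟩).elim

theorem exists_injective_hypRep (hw : ∀ j, w j ≠ 0)
    (hdist : ∀ i j, i ≠ j → Hyp (w i) (β i) ≠ Hyp (w j) (β j))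
    (hmeet : ∀ j, (Hyp (w j) (β j) ∩ interior P).Nonempty)
    (hbp : ∀ j, Hyp (w j) (β j) ∩ interior P ⊆ Breakpoints (oneLayer V1 c1 V2 c2)) :
    ∃ rep : Fin n → Fin N, Function.Injective rep ∧ ∀ j, IsKink V1 c1 P (rep j) ∧
      hypRep V1 c1 (rep j) = rep j ∧ Hyp (V1 (rep j)) (c1 (rep j)) = Hyp (w j) (β j) := by
  choose ι hι using fun j =>
    exists_neuron_hyp_eq V1 c1 V2 c2 (hw j) isOpen_interior (hmeet j) (hbp j)
  have hrep : ∀ j, IsKink V1 c1 P (hypRep V1 c1 (ι j)) ∧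
      hypRep V1 c1 (hypRep V1 c1 (ι j)) = hypRep V1 c1 (ι j) ∧
      Hyp (V1 (hypRep V1 c1 (ι j))) (c1 (hypRep V1 c1 (ι j))) = Hyp (w j) (β j) := fun j =>
    ⟨IsKink.hypRep V1 c1 ⟨(hι j).1, (hι j).2 ▸ hmeet j⟩, hypRep_hypRep V1 c1 _,
      (hyp_hypRep V1 c1 _).trans (hι j).2⟩
  refine ⟨fun j => hypRep V1 c1 (ι j), fun j j' h => ?_, hrep⟩
  have h : hypRep V1 c1 (ι j) = hypRep V1 c1 (ι j') := h
  by_contra hne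
  exact hdist j j' hne ((hrep j).2.2.symm.trans (by rw [h]; exact (hrep j').2.2))

theorem oneLayer_eq_sum_rep_add (hw : ∀ j, w j ≠ 0)
    (hbp : ∀ x ∈ interior P, (∀ j, x ∉ Hyp (w j) (β j)) → x ∉ Breakpoints (oneLayer V1 c1 V2 c2))
    {rep : Fin n → Fin N} (hinj : Function.Injective rep)
    (hrep : ∀ j, hypRep V1 c1 (rep j) = rep j ∧ Hyp (V1 (rep j)) (c1 (rep j)) = Hyp (w j) (β j))
    (x : Fin d → ℝ) (p : Fin m) :
    oneLayer V1 c1 V2 c2 x p =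
      ∑ j, kinkCoeff V1 c1 V2 P p (rep j) * max (V1 (rep j) ⬝ᵥ x + c1 (rep j)) 0 +
      ∑ i, V2 p i * (max (V1 i ⬝ᵥ x + c1 i) 0 - kinkTerm V1 c1 P i x) + c2 p := by
  rw [Fintype.sum_of_injective rep hinj _
    (fun i => kinkCoeff V1 c1 V2 P p i * max (V1 i ⬝ᵥ x + c1 i) 0)
    (fun i hi => by rw [kinkCoeff_eq_zero_of_notMem_range V1 c1 V2 c2 hw hbp hrep hi, zero_mul])
    fun _ => rfl, ← sum_mul_kinkTerm, oneLayer_apply]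
  simp only [mul_sub, sum_sub_distrib]
  ring

end Network

theorem sum_eq_sum_natAdd_of_perm {M : Type*} [AddCommMonoid M] {n k : ℕ}
    (f : Fin (n + k) → M) (π : Equiv.Perm (Fin (n + k))) (h : ∀ j, f (π (Fin.castAdd k j)) = 0) :
    ∑ i, f i = ∑ q, f (π (Fin.natAdd n q)) := by
  rw [← Equiv.sum_comp π f, Fin.sum_univ_add, sum_eq_zero fun j _ => h j, zero_add]

theorem exists_perm_castAdd_eq {n k : ℕ} {rep : Fin n → Fin (n + k)}
    (hinj : Function.Injective rep) :
    ∃ π : Equiv.Perm (Fin (n + k)), ∀ j, π (Fin.castAdd k j) = rep j := by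
  classical
  obtain ⟨g, hg⟩ := Set.MapsTo.exists_equiv_extend_of_card_eq (t := univ)
    (s := Set.range (Fin.castAdd k)) (f := Fin.addCases rep (Fin.natAdd n)) card_univ.symm
    (fun _ _ => by simp) (by
      rintro _ ⟨i, rfl⟩ _ ⟨j, rfl⟩ h
      simp only [Fin.addCases_left] at h
      rw [hinj h])
  exact ⟨g.trans (Equiv.subtypeUnivEquiv mem_univ), fun j => by simpa using hg _ ⟨j, rfl⟩⟩

theorem exists_oneLayer_eq_on {d m n k : ℕ} {P : Set (Fin d → ℝ)} (hP : IsCompact P)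
    (g : (Fin d → ℝ) → Fin m → ℝ) (u : Fin n → Fin d → ℝ) (γ : Fin n → ℝ)
    (a : Fin m → Fin n → ℝ) (b : Fin m → Fin k → ℝ) (h : Fin k → (Fin d → ℝ) → ℝ)
    (hh : ∀ q, IsAffineOn (h q) P) (c : Fin m → ℝ)
    (hg : ∀ x ∈ P, ∀ p,
      g x p = ∑ j, a p j * max (u j ⬝ᵥ x + γ j) 0 + ∑ q, b p q * h q x + c p) :
    ∃ (V1' : Fin (n + k) → Fin d → ℝ) (c1' : Fin (n + k) → ℝ)
      (V2' : Fin m → Fin (n + k) → ℝ) (c2' : Fin m → ℝ),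
      (∀ x ∈ P, ∀ p, oneLayer V1' c1' V2' c2' x p = g x p) ∧
      (∀ j, V1' (Fin.castAdd k j) = u j ∧ c1' (Fin.castAdd k j) = γ j) ∧
      ∀ q, ∀ x ∈ P, 0 < V1' (Fin.natAdd n q) ⬝ᵥ x + c1' (Fin.natAdd n q) := by
  choose A B hAB using hh
  choose C hC using fun q =>
    hP.exists_bound_of_continuousOn (f := fun x => A q ⬝ᵥ x + B q) (by fun_prop)
  have hpos : ∀ q, ∀ x ∈ P, 0 < A q ⬝ᵥ x + (B q + C q + 1) := fun q x hx => by
    have := neg_abs_le (A q ⬝ᵥ x + B q)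
    have := hC q x hx
    rw [Real.norm_eq_abs] at this
    linarith
  refine ⟨Fin.addCases u A, Fin.addCases γ fun q => B q + C q + 1,
    fun p => Fin.addCases (a p) (b p), fun p => c p - ∑ q, b p q * (C q + 1),
    fun x hx p => ?_, fun j => by simp, fun q x hx => by simpa using hpos q x hx⟩
  have hspare : ∀ q, b p q * max (A q ⬝ᵥ x + (B q + C q + 1)) 0 =
      b p q * h q x + b p q * (C q + 1) := fun q => by
    rw [max_eq_left (hpos q x hx).le, hAB q x hx]
    ring
  simp only [oneLayer_apply, Fin.sum_univ_add, Fin.addCases_left, Fin.addCases_right, hspare,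
    sum_add_distrib, hg x hx p]
  ring

theorem IsPolytope.isCompact {d : ℕ} {P : Set (Fin d → ℝ)} (hP : IsPolytope P) : IsCompact P :=
  let ⟨s, hs⟩ := hP
  hs ▸ s.finite_toSet.isCompact_convexHull ℝ

theorem IsPolytope.convex {d : ℕ} {P : Set (Fin d → ℝ)} (hP : IsPolytope P) : Convex ℝ P :=
  let ⟨_, hs⟩ := hP
  hs ▸ convex_convexHull ℝ _

/-- **Compressing the visible hyperplanes.**
If a one-hidden-layer network with `n + k` neurons has exactly `n` pairwise
distinct breakpoint hyperplanes inside the interior of a polytope `P`, then the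
same function on `P` is computed by a one-hidden-layer network with `n + k`
neurons in which the first `n` neurons have exactly these hyperplanes as zero
sets and the last `k` neurons have preactivation nowhere zero on `P`. -/
theorem compress_visible_hyperplanes (d m n k : ℕ)
    (P : Set (Fin d → ℝ)) (hP : IsPolytope P) (hPint : (interior P).Nonempty)
    (V1 : Fin (n + k) → Fin d → ℝ) (c1 : Fin (n + k) → ℝ)
    (V2 : Fin m → Fin (n + k) → ℝ) (c2 : Fin m → ℝ)
    (w : Fin n → Fin d → ℝ) (β : Fin n → ℝ)
    (hw : ∀ j, w j ≠ 0)
    (hdist : ∀ i j : Fin n, i ≠ j → Hyp (w i) (β i) ≠ Hyp (w j) (β j))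
    (hmeet : ∀ j, (Hyp (w j) (β j) ∩ interior P).Nonempty)
    (hbp : Breakpoints (oneLayer V1 c1 V2 c2) ∩ interior P =
      (⋃ j, Hyp (w j) (β j)) ∩ interior P) :
    ∃ (V1' : Fin (n + k) → Fin d → ℝ) (c1' : Fin (n + k) → ℝ)
      (V2' : Fin m → Fin (n + k) → ℝ) (c2' : Fin m → ℝ),
      (∀ x ∈ P, ∀ p, oneLayer V1' c1' V2' c2' x p = oneLayer V1 c1 V2 c2 x p) ∧
      (∀ j : Fin n, V1' (Fin.castAdd k j) ≠ 0 ∧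
        {x | sInner (V1' (Fin.castAdd k j)) x + c1' (Fin.castAdd k j) = 0} =
          Hyp (w j) (β j)) ∧
      (∀ j : Fin k, ∀ x ∈ P, sInner (V1' (Fin.natAdd n j)) x + c1' (Fin.natAdd n j) ≠ 0) := by
  have hcl : P ⊆ closure (interior P) :=
    (hP.convex.closure_interior_eq_closure_of_nonempty_interior hPint).symm ▸ subset_closure
  have hbp_on : ∀ j, Hyp (w j) (β j) ∩ interior P ⊆ Breakpoints (oneLayer V1 c1 V2 c2) :=
    fun j x hx => (hbp.ge ⟨Set.mem_iUnion.2 ⟨j, hx.1⟩, hx.2⟩).1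
  have hbp_off : ∀ x ∈ interior P, (∀ j, x ∉ Hyp (w j) (β j)) →
      x ∉ Breakpoints (oneLayer V1 c1 V2 c2) := fun x hx hxH hB =>
    let ⟨j, hj⟩ := Set.mem_iUnion.1 (hbp.le ⟨hB, hx⟩).1
    hxH j hj
  obtain ⟨rep, hinj, hrep⟩ := exists_injective_hypRep V1 c1 V2 c2 hw hdist hmeet hbp_on
  obtain ⟨π, hπ⟩ := exists_perm_castAdd_eq hinj
  let spare := fun q => π (Fin.natAdd n q)
  obtain ⟨V1', c1', V2', c2', heq, hvis, hpos⟩ := exists_oneLayer_eq_on hP.isCompact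
    (oneLayer V1 c1 V2 c2) (V1 ∘ rep) (c1 ∘ rep) (fun p j => kinkCoeff V1 c1 V2 P p (rep j))
    (fun p q => V2 p (spare q))
    (fun q x => max (V1 (spare q) ⬝ᵥ x + c1 (spare q)) 0 - kinkTerm V1 c1 P (spare q) x)
    (fun q => isAffineOn_max_zero_sub_kinkTerm V1 c1 hP.convex hcl _) c2 fun x _ p => by
      rw [oneLayer_eq_sum_rep_add V1 c1 V2 c2 hw hbp_off hinj (fun j => (hrep j).2) x p,
        sum_eq_sum_natAdd_of_perm _ π fun j => by
          rw [hπ, kinkTerm_of_hypRep_eq V1 c1 (hrep j).1 (hrep j).2.1, sub_self, mul_zero]]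
      rfl
  refine ⟨V1', c1', V2', c2', heq, fun j => ?_, fun q x hx => (hpos q x hx).ne'⟩
  rw [(hvis j).1, (hvis j).2]
  exact ⟨(hrep j).1.1, (hrep j).2.2⟩

end ReLUNet
end
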